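/- arXiv:1207.5439 — 9 statements merged into one kernel-verified Lean document; each statement's English description precedes it below -/
import Mathlib

section
/- For all integers n ≥ 2m and m ≥ 2, there exists a simple graph G(V,E) with |V| = n and |E| = m(n−1), together with a partition E = E_1 ∪ E_2 ∪ ⋯ ∪ E_m into pairwise disjoint sets, such that each subgraph (V, E_i) is connected (hence a spanning tree) for all 1 ≤ i ≤ m. -/
private def zz (k : ℕ) : ℤ := if k % 2 = 1 then ((k+1)/2 : ℕ) else -((k/2 : ℕ))

private lemma zz_inj {k l : ℕ} (h : zz k = zz l) : k = l := by
  unfold zz at h; split_ifs at h <;> omega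

private lemma zz_add (k : ℕ) : zz k + zz (k+1) = if k % 2 = 0 then 1 else 0 := by
  unfold zz; split_ifs <;> omega

private lemma zz_bound {n k l : ℕ} (hk : k < n) (hl : l < n) : |zz k - zz l| < (n:ℤ) := by
  rw [abs_lt]; unfold zz; split_ifs <;> constructor <;> omega

private lemma zz_inj_mod {n : ℕ} [NeZero n] {k l : ℕ} (hk : k < n) (hl : l < n)
    (h : ((zz k : ℤ) : ZMod n) = ((zz l : ℤ) : ZMod n)) : k = l := by
  have hd : ((n : ℕ) : ℤ) ∣ (zz k - zz l) := by
    rw [← ZMod.intCast_zmod_eq_zero_iff_dvd]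
    push_cast
    rw [sub_eq_zero]; exact h
  exact zz_inj (sub_eq_zero.mp (Int.eq_zero_of_abs_lt_dvd hd (zz_bound hk hl)))

open SimpleGraph in
private lemma conn_aux {V : Type*} (E : Set (Sym2 V)) (u : ℕ → V) (N : ℕ)
    (hadj : ∀ k < N, s(u k, u (k+1)) ∈ E ∧ u k ≠ u (k+1))
    (hsurj : ∀ x, ∃ k ≤ N, u k = x) :
    (SimpleGraph.fromEdgeSet E).Connected := by
  have hreach : ∀ k ≤ N, (fromEdgeSet E).Reachable (u 0) (u k) := by
    intro k hk
    induction k with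
    | zero => exact Reachable.refl _
    | succ k ih =>
      exact (ih (by omega)).trans (Adj.reachable
        ((fromEdgeSet_adj E).mpr ⟨(hadj k (by omega)).1, (hadj k (by omega)).2⟩))
  haveI : Nonempty V := ⟨u 0⟩
  refine ⟨fun x y => ?_⟩
  obtain ⟨k, hk, rfl⟩ := hsurj x
  obtain ⟨l, hl, rfl⟩ := hsurj y
  exact (hreach k hk).symm.trans (hreach l hl)

open SimpleGraph

/-- For all `n ≥ 2m`, `m ≥ 2`, there exists a simple graph on `n`
vertices with `m(n-1)` edges whose edge set can be partitioned into `m` pairwise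
disjoint classes, each of which spans a connected (spanning tree) subgraph. -/
theorem stmt_1 (n m : ℕ) (hn : n ≥ 2 * m) (hm : m ≥ 2) :
    ∃ (G : SimpleGraph (Fin n)) (E : Fin m → Set (Sym2 (Fin n))),
      (⋃ i, E i) = G.edgeSet ∧
      (Pairwise fun i j => Disjoint (E i) (E j)) ∧
      G.edgeSet.ncard = m * (n - 1) ∧
      ∀ i, (SimpleGraph.fromEdgeSet (E i)).Connected := by
  haveI : NeZero n := ⟨by omega⟩
  -- the zigzag vertex sequence of the i-th Hamiltonian path, over ZMod n
  set u : Fin m → ℕ → ZMod n := fun i k => ((i.val : ℕ) : ZMod n) + ((zz k : ℤ) : ZMod n)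
    with hu
  have uinj : ∀ (i : Fin m) {k l : ℕ}, k < n → l < n → u i k = u i l → k = l := by
    intro i k l hk hl h
    exact zz_inj_mod hk hl (by simpa [hu] using h)
  have usurj : ∀ (i : Fin m) (x : ZMod n), ∃ k < n, u i k = x := by
    intro i x
    have hcard : Fintype.card (Fin n) = Fintype.card (ZMod n) := by simp [ZMod.card]
    have hbij : Function.Bijective (fun k : Fin n => u i k.val) :=
      (Fintype.bijective_iff_injective_and_card _).mpr
        ⟨fun k l h => Fin.ext (uinj i k.isLt l.isLt h), hcard⟩
    obtain ⟨k, hk⟩ := hbij.2 x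
    exact ⟨k.val, k.isLt, hk⟩
  -- the edge finsets over ZMod n
  set F : Fin m → Finset (Sym2 (ZMod n)) :=
    fun i => (Finset.range (n-1)).image (fun k => s(u i k, u i (k+1))) with hF
  have hne : ∀ (i : Fin m) (k : ℕ), k < n - 1 → u i k ≠ u i (k+1) := by
    intro i k hk h
    exact absurd (uinj i (by omega) (by omega) h) (by omega)
  -- sum invariant for disjointness
  have sumF : ∀ (i : Fin m) (x : Sym2 (ZMod n)), x ∈ F i →
      ∃ c ≤ 1, Sym2.lift ⟨fun a b => a + b, fun a b => add_comm a b⟩ x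
        = ((2 * i.val + c : ℕ) : ZMod n) := by
    intro i x hx
    simp only [hF, Finset.mem_image, Finset.mem_range] at hx
    obtain ⟨k, hk, rfl⟩ := hx
    refine ⟨if k % 2 = 0 then 1 else 0, by split_ifs <;> omega, ?_⟩
    have hz : ((zz k + zz (k+1) : ℤ) : ZMod n)
        = (((if k % 2 = 0 then 1 else 0 : ℕ) : ℕ) : ZMod n) := by
      rw [zz_add]; split_ifs <;> simp
    simp only [Sym2.lift_mk, hu]
    push_cast at hz ⊢
    linear_combination hz
  have Fdisj : ∀ (i j : Fin m), i ≠ j → Disjoint (F i) (F j) := by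
    intro i j hij
    rw [Finset.disjoint_left]
    intro x hxi hxj
    obtain ⟨c, hc, hci⟩ := sumF i x hxi
    obtain ⟨d, hd, hdj⟩ := sumF j x hxj
    rw [hci] at hdj
    have h1 : (2 * i.val + c) < n := by omega
    have h2 : (2 * j.val + d) < n := by omega
    have := congrArg ZMod.val hdj
    rw [ZMod.val_cast_of_lt h1, ZMod.val_cast_of_lt h2] at this
    exact hij (Fin.ext (by omega))
  have Fcard : ∀ i : Fin m, (F i).card = n - 1 := by
    intro i
    rw [hF]
    rw [Finset.card_image_of_injOn, Finset.card_range]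
    intro k hk l hl h
    simp only [Finset.coe_range, Set.mem_Iio] at hk hl
    rcases Sym2.eq_iff.mp h with ⟨h1, _⟩ | ⟨h1, h2⟩
    · exact uinj i (by omega) (by omega) h1
    · have := uinj i (by omega) (by omega) h1
      have := uinj i (by omega) (by omega) h2
      omega
  -- transport to Fin n
  let e : ZMod n ≃ Fin n := Fintype.equivFinOfCardEq (ZMod.card n)
  set E : Fin m → Set (Sym2 (Fin n)) := fun i => ↑((F i).image (Sym2.map e)) with hE
  set G : SimpleGraph (Fin n) := fromEdgeSet (⋃ i, E i) with hG
  have hUnion : (⋃ i, E i) = ↑(Finset.univ.biUnion (fun i => (F i).image (Sym2.map e))) := by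
    rw [Finset.coe_biUnion]
    simp [hE]
  have hnodiag : ∀ x ∈ ⋃ i, E i, ¬ x.IsDiag := by
    intro x hx
    simp only [hE, Set.mem_iUnion, Finset.coe_image, Set.mem_image, Finset.mem_coe] at hx
    obtain ⟨i, y, hy, rfl⟩ := hx
    simp only [hF, Finset.mem_image, Finset.mem_range] at hy
    obtain ⟨k, hk, rfl⟩ := hy
    simp only [Sym2.map_pair_eq, Sym2.mk_isDiag_iff]
    exact fun h => hne i k hk (e.injective h)
  have hedge : (⋃ i, E i) = G.edgeSet := by
    rw [hG, edgeSet_fromEdgeSet]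
    exact (sdiff_eq_left.mpr (Set.disjoint_left.mpr fun x hx hd => hnodiag x hx hd)).symm
  refine ⟨G, E, hedge, ?_, ?_, ?_⟩
  · intro i j hij
    rw [hE]
    simp only [Finset.coe_image]
    exact Set.disjoint_image_of_injective (Sym2.map.injective e.injective)
      ((Finset.disjoint_coe).mpr (Fdisj i j hij))
  · rw [← hedge, hUnion, Set.ncard_coe_finset, Finset.card_biUnion]
    · simp only [Finset.card_image_of_injective _ (Sym2.map.injective e.injective)]
      simp [Fcard, Finset.sum_const, mul_comm]
    · intro i _ j _ hij
      exact Finset.disjoint_image (Sym2.map.injective e.injective) |>.mpr (Fdisj i j hij)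
  · intro i
    apply conn_aux (E i) (fun k => e (u i k)) (n - 1)
    · intro k hk
      constructor
      · simp only [hE, Finset.coe_image, Set.mem_image, Finset.mem_coe]
        refine ⟨s(u i k, u i (k+1)), ?_, by simp [Sym2.map_pair_eq]⟩
        simp only [hF, Finset.mem_image, Finset.mem_range]
        exact ⟨k, hk, rfl⟩
      · exact fun h => hne i k hk (e.injective h)
    · intro x
      obtain ⟨k, hk, hks⟩ := usurj i (e.symm x)
      exact ⟨k, by omega, by rw [hks]; simp⟩
end

section
/- Given positive integers n, m, t with m = t+1, there exists a (t+1)-color connected colored edge graph G(V,E,C,f) with |V| = n and |C| = m if and only if n ≥ 2m. -/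
/-!
Removing any `t` of the `t + 1` colours leaves exactly one colour class, so the condition says
that every colour class is a connected spanning subgraph. These classes are edge-disjoint and
each has at least `n - 1` edges, whence `m (n - 1) ≤ n (n - 1) / 2`, i.e. `n ≥ 2m`. Conversely,
for `n ≥ 2m` the complete graph on `n` vertices can be coloured so that colour `c` contains a
spanning double star on the edge `{2c, 2c + 1}`.
-/

open SimpleGraph Finset

namespace SimpleGraph

variable {V C : Type*}

def colorClass (G : SimpleGraph V) (f : Sym2 V → C) (c : C) : SimpleGraph V :=
  G.deleteEdges (f ⁻¹' {c}ᶜ)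

variable {G : SimpleGraph V} {f : Sym2 V → C}

@[simp]
lemma colorClass_adj {c : C} {x y : V} :
    (G.colorClass f c).Adj x y ↔ G.Adj x y ∧ f s(x, y) = c := by
  simp [colorClass]

lemma edgeSet_colorClass (c : C) : (G.colorClass f c).edgeSet = G.edgeSet ∩ f ⁻¹' {c} := by
  simp [colorClass, edgeSet_deleteEdges]

lemma forall_card_eq_reachable_iff_preconnected_colorClass [Fintype C] [DecidableEq C] {t : ℕ}
    (hC : Fintype.card C = t + 1) :
    (∀ Ct : Finset C, #Ct = t → ∀ A B : V, (G.deleteEdges (f ⁻¹' ↑Ct)).Reachable A B) ↔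
      ∀ c, (G.colorClass f c).Preconnected := by
  constructor
  · intro h c
    have := h {c}ᶜ (by rw [card_compl, card_singleton, hC]; rfl)
    rwa [coe_compl, coe_singleton] at this
  · intro h Ct hCt
    obtain ⟨c, hc⟩ := card_eq_one.1 (show #Ctᶜ = 1 by rw [card_compl]; omega)
    rw [← compl_compl Ct, hc, coe_compl, coe_singleton]
    exact h c

variable [Fintype V] [Fintype C]

lemma card_mul_le_card_edgeFinset [DecidableRel G.Adj] (h : ∀ c, (G.colorClass f c).Connected) :
    Fintype.card C * (Fintype.card V - 1) ≤ #G.edgeFinset := by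
  classical
  have hfiber (c : C) : Fintype.card V - 1 ≤ #{e ∈ G.edgeFinset | f e = c} := by
    have := (h c).card_vert_le_card_edgeSet_add_one
    have hedges : (G.colorClass f c).edgeSet = ↑{e ∈ G.edgeFinset | f e = c} := by
      ext; simp [edgeSet_colorClass]
    rw [hedges, Nat.card_coe_set_eq, Set.ncard_coe_finset, Nat.card_eq_fintype_card] at this
    omega
  calc Fintype.card C * (Fintype.card V - 1) = ∑ _c : C, (Fintype.card V - 1) := by simp
    _ ≤ ∑ c : C, #{e ∈ G.edgeFinset | f e = c} := sum_le_sum fun c _ ↦ hfiber c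
    _ = #G.edgeFinset := (card_eq_sum_card_fiberwise fun _ _ ↦ mem_univ _).symm

lemma two_mul_card_le_of_preconnected_colorClass (hV : 2 ≤ Fintype.card V)
    (h : ∀ c, (G.colorClass f c).Preconnected) : 2 * Fintype.card C ≤ Fintype.card V := by
  classical
  have : Nonempty V := Fintype.card_pos_iff.1 (by omega)
  have hmul := (card_mul_le_card_edgeFinset fun c ↦ ⟨h c⟩).trans card_edgeFinset_le_card_choose_two
  rw [Nat.choose_two_right] at hmul
  have : 2 * Fintype.card C * (Fintype.card V - 1) ≤ Fintype.card V * (Fintype.card V - 1) := by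
    rw [mul_assoc]; omega
  exact Nat.le_of_mul_le_mul_right this (by omega)

end SimpleGraph

/-- Colour of the edge `{a, b}` of the complete graph. Inside the first `2m` vertices the edge
takes the colour `⌊·/2⌋` of its larger end if `a + b` is odd and of its smaller end otherwise;
the parity rule ensures that every vertex reaches `2c` or `2c + 1` by an edge of colour `c`. -/
def pairColor (m a b : ℕ) : ℕ :=
  if max a b < 2 * m ∧ (a + b) % 2 = 1 then max a b / 2 else min (min a b / 2) (m - 1)

lemma pairColor_lt {m : ℕ} (hm : 0 < m) (a b : ℕ) : pairColor m a b < m := by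
  unfold pairColor; split_ifs <;> omega

lemma pairColor_comm (m a b : ℕ) : pairColor m a b = pairColor m b a := by
  simp only [pairColor, max_comm a b, min_comm a b, add_comm a b]

lemma pairColor_two_mul {m c : ℕ} (hc : c < m) : pairColor m (2 * c) (2 * c + 1) = c := by
  unfold pairColor; split_ifs <;> omega

lemma pairColor_eq_or {m c : ℕ} (hc : c < m) (x : ℕ) :
    pairColor m x (2 * c) = c ∨ pairColor m x (2 * c + 1) = c ∧ x ≠ 2 * c + 1 := by
  unfold pairColor; split_ifs <;> omega

def pairColoring (n m : ℕ) [NeZero m] : Sym2 (Fin n) → Fin m :=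
  Sym2.lift ⟨fun a b ↦ ⟨pairColor m a b, pairColor_lt (NeZero.pos m) a b⟩,
    fun a b ↦ Fin.ext (pairColor_comm m a b)⟩

section Construction

variable {n m : ℕ} [NeZero m]

lemma exists_mem_edgeSet_pairColoring_eq (h : 2 * m ≤ n) (c : Fin m) :
    ∃ e ∈ (⊤ : SimpleGraph (Fin n)).edgeSet, pairColoring n m e = c :=
  ⟨s(⟨2 * c, by omega⟩, ⟨2 * c + 1, by omega⟩), by simp [Fin.ext_iff],
    Fin.ext (pairColor_two_mul c.2)⟩

lemma connected_colorClass_pairColoring (h : 2 * m ≤ n) (c : Fin m) :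
    ((⊤ : SimpleGraph (Fin n)).colorClass (pairColoring n m) c).Connected := by
  set H := (⊤ : SimpleGraph (Fin n)).colorClass (pairColoring n m) c
  have hadj {x y : Fin n} (hxy : (x : ℕ) ≠ y) (hc : pairColor m x y = c) : H.Adj x y :=
    colorClass_adj.2 ⟨fun h ↦ hxy (congrArg Fin.val h), Fin.ext hc⟩
  let P : Fin n := ⟨2 * c, by omega⟩
  let Q : Fin n := ⟨2 * c + 1, by omega⟩
  have hPQ : H.Adj P Q := hadj (by simp [P, Q]) (pairColor_two_mul c.2)
  have hreach (v : Fin n) : H.Reachable v P := by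
    by_cases hvP : v = P
    · exact hvP ▸ .rfl
    rcases pairColor_eq_or c.2 v with hvP' | ⟨hvQ, hvQ'⟩
    · exact (hadj (by simpa [P, Fin.ext_iff] using hvP) hvP').reachable
    · exact (hadj hvQ' hvQ).reachable.trans hPQ.symm.reachable
  have : Nonempty (Fin n) := ⟨P⟩
  exact .mk fun u v ↦ (hreach u).trans (hreach v).symm

end Construction

theorem stmt_2_general (n m t : ℕ) (hmt : m = t + 1) :
    (∃ (G : SimpleGraph (Fin n)) (f : Sym2 (Fin n) → Fin m),
        (∀ c : Fin m, ∃ e ∈ G.edgeSet, f e = c) ∧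
        ∀ Ct : Finset (Fin m), Ct.card = t →
          ∀ A B : Fin n, (G.deleteEdges (f ⁻¹' ↑Ct)).Reachable A B) ↔
      n ≥ 2 * m := by
  subst hmt
  simp only [forall_card_eq_reachable_iff_preconnected_colorClass (Fintype.card_fin _)]
  constructor
  · rintro ⟨G, f, hsurj, hconn⟩
    obtain ⟨⟨u, v⟩, huv, -⟩ := hsurj 0
    have : Nontrivial (Fin n) := (G.mem_edgeSet.1 huv).nontrivial
    simpa using two_mul_card_le_of_preconnected_colorClass Fintype.one_lt_card hconn
  · intro h
    exact ⟨⊤, pairColoring n (t + 1), exists_mem_edgeSet_pairColoring_eq h,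
      fun c ↦ (connected_colorClass_pairColoring h c).preconnected⟩

/-- For positive integers `n, m, t` with `m = t + 1`, there exists a
`(t+1)`-color connected colored edge graph with `n` vertices and `m` colors iff
`n ≥ 2m`. -/
theorem stmt_2 (n m t : ℕ) (hn : 0 < n) (ht : 0 < t) (hmt : m = t + 1) :
    (∃ (G : SimpleGraph (Fin n)) (f : Sym2 (Fin n) → Fin m),
        (∀ c : Fin m, ∃ e ∈ G.edgeSet, f e = c) ∧
        ∀ Ct : Finset (Fin m), Ct.card = t →
          ∀ A B : Fin n, (G.deleteEdges (f ⁻¹' ↑Ct)).Reachable A B) ↔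
      n ≥ 2 * m :=
  stmt_2_general n m t hmt
end

section
/- If G(V,E,C,f) is a (t+1)-color connected colored edge graph with |V| = n, |E| = λ, |C| = m, then the partition (E, {E_c : c ∈ C}) is a (t; n−1)-cover free family: for any t colors c_1,…,c_t ∈ C, |E \ (E_{c_1} ∪ ⋯ ∪ E_{c_t})| ≥ n−1. -/
theorem stmt_4_general {V C : Type*} [Fintype V]
    (G : SimpleGraph V) (f : Sym2 V → C) (n t : ℕ)
    (hn : Fintype.card V = n)
    (hconn : ∀ Ct : Finset C, Ct.card = t →
        ∀ A B : V, (G.deleteEdges (f ⁻¹' ↑Ct)).Reachable A B) :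
    ∀ Ct : Finset C, Ct.card = t →
      (G.edgeSet \ (f ⁻¹' ↑Ct)).ncard ≥ n - 1 := by
  intro Ct hCt
  rcases isEmpty_or_nonempty V with hV | hV
  · simp [← hn]
  have hconnected : (G.deleteEdges (f ⁻¹' ↑Ct)).Connected := ⟨hconn Ct hCt⟩
  have hcard := hconnected.card_vert_le_card_edgeSet_add_one
  rw [SimpleGraph.edgeSet_deleteEdges, Nat.card_eq_fintype_card, hn, Nat.card_coe_set_eq] at hcard
  omega

/-- If `G(V,E,C,f)` is a `(t+1)`-color connected colored edge graph
with `|V| = n`, then the color classes form a `(t; n-1)`-cover free family: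
removing the edges of any `t` colors leaves at least `n - 1` edges. -/
theorem stmt_4 {V C : Type*} [Fintype V] [Fintype C]
    (G : SimpleGraph V) (f : Sym2 V → C) (n lam m t : ℕ)
    (hn : Fintype.card V = n) (hlam : G.edgeSet.ncard = lam)
    (hm : Fintype.card C = m)
    (hsurj : ∀ c : C, ∃ e ∈ G.edgeSet, f e = c)
    (hconn : ∀ Ct : Finset C, Ct.card = t →
        ∀ A B : V, (G.deleteEdges (f ⁻¹' ↑Ct)).Reachable A B) :
    ∀ Ct : Finset C, Ct.card = t →
      (G.edgeSet \ (f ⁻¹' ↑Ct)).ncard ≥ n - 1 :=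
  stmt_4_general G f n t hn hconn
end

section
/- For positive integers λ, m, t with t ≤ m, define μ(λ,m;t) as the maximum over all partitions of a λ-element set X into m disjoint blocks B_1,…,B_m of the minimum, over all choices of t blocks, of |X minus the union of those t blocks|. Then μ(λ,m;t) = (m−t)·⌊λ/m⌋ if t ≥ λ − m·⌊λ/m⌋, and μ(λ,m;t) = (m−t)·⌊λ/m⌋ + (λ − m·⌊λ/m⌋ − t) otherwise. -/
open Finset in
lemma sum_sizes_eq (q r k : ℕ) :
    ∑ j ∈ Finset.range k, (q + if j < r then 1 else 0) = k * q + min k r := by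
  rw [Finset.sum_add_distrib, Finset.sum_const, Finset.card_range, smul_eq_mul]
  congr 1
  rw [Finset.sum_boole]
  norm_cast
  have : (Finset.range k).filter (· < r) = Finset.range (min k r) := by
    ext x; simp [lt_min_iff, and_comm]
  rw [this, Finset.card_range]

lemma exists_big_subset (m t lam : ℕ) (htm : t ≤ m) (n : Fin m → ℕ)
    (hsum : ∑ i, n i = lam) :
    ∃ T : Finset (Fin m), T.card = t ∧ t * (lam / m) + min t (lam % m) ≤ ∑ i ∈ T, n i := by
  set q := lam / m with hq
  set r := lam % m with hr
  have hmod : m * q + r = lam := Nat.div_add_mod lam m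
  set H : Finset (Fin m) := Finset.univ.filter (fun i => q + 1 ≤ n i) with hH
  by_cases h : t ≤ H.card
  · obtain ⟨T, hTH, hT⟩ := Finset.exists_subset_card_eq h
    refine ⟨T, hT, ?_⟩
    have h1 : T.card * (q + 1) ≤ ∑ i ∈ T, n i :=
      Finset.card_nsmul_le_sum T n (q+1) (fun i hi => by
        have := hTH hi; simp [hH] at this; exact this)
    calc t * q + min t r ≤ t * q + t := by
          exact Nat.add_le_add_left (min_le_left _ _) _
      _ = t * (q + 1) := by ring
      _ ≤ ∑ i ∈ T, n i := hT ▸ h1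
  · push_neg at h
    obtain ⟨T, hHT, _, hT⟩ := Finset.exists_subsuperset_card_eq (Finset.subset_univ H)
      (le_of_lt h) (by simpa using htm)
    refine ⟨T, hT, ?_⟩
    have hcompl : ∀ i ∈ Tᶜ, n i ≤ q := by
      intro i hi
      have : i ∉ H := fun hmem => (Finset.mem_compl.mp hi) (hHT hmem)
      simp [hH] at this
      omega
    have h2 : ∑ i ∈ Tᶜ, n i ≤ (m - t) * q := by
      calc ∑ i ∈ Tᶜ, n i ≤ Tᶜ.card * q := by
            calc ∑ i ∈ Tᶜ, n i ≤ ∑ _i ∈ Tᶜ, q := Finset.sum_le_sum hcompl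
              _ = Tᶜ.card * q := by rw [Finset.sum_const, smul_eq_mul]
        _ = (m - t) * q := by rw [Finset.card_compl, hT, Fintype.card_fin]
    have h3 : ∑ i ∈ T, n i + ∑ i ∈ Tᶜ, n i = lam := by
      rw [Finset.sum_add_sum_compl, hsum]
    have h4 : t * q + (m - t) * q = m * q := by
      rw [← Nat.add_mul, Nat.add_sub_cancel' htm]
    have : t * q + r ≤ ∑ i ∈ T, n i := by omega
    exact le_trans (Nat.add_le_add_left (min_le_right _ _) _) this

lemma ncard_biUnion {lam m : ℕ} (B : Fin m → Set (Fin lam))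
    (hdisj : Pairwise fun i j => Disjoint (B i) (B j)) (T : Finset (Fin m)) :
    (⋃ i ∈ T, B i).ncard = ∑ i ∈ T, (B i).ncard := by
  classical
  have hco : (⋃ i ∈ T, B i) = ↑(T.biUnion fun i => (B i).toFinset) := by
    ext x; simp
  rw [hco, Set.ncard_coe_finset, Finset.card_biUnion]
  · exact Finset.sum_congr rfl fun i _ => (Set.ncard_eq_toFinset_card' _).symm
  · intro i _ j _ hij
    simpa [Finset.disjoint_left, Set.disjoint_left] using hdisj hij

lemma ncard_compl_biUnion {lam m : ℕ} (B : Fin m → Set (Fin lam))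
    (hdisj : Pairwise fun i j => Disjoint (B i) (B j)) (T : Finset (Fin m)) :
    (Set.univ \ ⋃ i ∈ T, B i).ncard = lam - ∑ i ∈ T, (B i).ncard := by
  rw [Set.ncard_diff (Set.subset_univ _), ncard_biUnion B hdisj, Set.ncard_univ,
    Nat.card_eq_fintype_card, Fintype.card_fin]

lemma sum_ncard_eq {lam m : ℕ} (B : Fin m → Set (Fin lam))
    (hdisj : Pairwise fun i j => Disjoint (B i) (B j))
    (hcover : (⋃ i, B i) = Set.univ) :
    ∑ i, (B i).ncard = lam := by
  have h := ncard_biUnion B hdisj Finset.univ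
  rw [← h]
  have : (⋃ i ∈ Finset.univ, B i) = ⋃ i, B i := by simp
  rw [this, hcover, Set.ncard_univ, Nat.card_eq_fintype_card, Fintype.card_fin]

lemma exists_partition (lam m : ℕ) (n : Fin m → ℕ) (hsum : ∑ i, n i = lam) :
    ∃ B : Fin m → Set (Fin lam),
      (Pairwise fun i j => Disjoint (B i) (B j)) ∧
      (⋃ i, B i) = Set.univ ∧ ∀ i, (B i).ncard = n i := by
  classical
  set n' : ℕ → ℕ := fun j => if h : j < m then n ⟨j, h⟩ else 0 with hn'
  set c : ℕ → ℕ := fun k => ∑ j ∈ Finset.range k, n' j with hc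
  have hmono : Monotone c := fun a b hab =>
    Finset.sum_le_sum_of_subset (Finset.range_subset_range.mpr hab)
  have hcs : ∀ k, c (k + 1) = c k + n' k := fun k => Finset.sum_range_succ _ _
  have hcm : c m = lam := by
    have h1 : c m = ∑ i : Fin m, n' i.val := (Fin.sum_univ_eq_sum_range n' m).symm
    rw [h1, ← hsum]
    exact Finset.sum_congr rfl fun i _ => by simp [hn', i.isLt]
  set B : Fin m → Set (Fin lam) :=
    fun i => {x | c i.val ≤ x.val ∧ x.val < c (i.val + 1)} with hB
  have hub : ∀ i : Fin m, c (i.val + 1) ≤ lam := fun i => hcm ▸ hmono i.isLt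
  refine ⟨B, ?_, ?_, ?_⟩
  · intro i j hij
    rcases lt_or_gt_of_ne hij with h | h
    · rw [Set.disjoint_left]
      rintro x ⟨_, hx2⟩ ⟨hx3, _⟩
      have := hmono (show (i:ℕ)+1 ≤ (j:ℕ) from h)
      omega
    · rw [Set.disjoint_left]
      rintro x ⟨hx1, _⟩ ⟨_, hx4⟩
      have := hmono (show (j:ℕ)+1 ≤ (i:ℕ) from h)
      omega
  · ext x
    simp only [Set.mem_iUnion, Set.mem_univ, iff_true]
    have key : ∀ k, k ≤ m → x.val < c k →
        ∃ i : ℕ, i < k ∧ c i ≤ x.val ∧ x.val < c (i + 1) := by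
      intro k
      induction k with
      | zero => intro _ h; simp [hc] at h
      | succ k ih =>
        intro hkm hx
        by_cases h : c k ≤ x.val
        · exact ⟨k, lt_add_one k, h, hx⟩
        · obtain ⟨i, hi, h1, h2⟩ := ih (le_of_lt hkm) (lt_of_not_ge h)
          exact ⟨i, hi.trans (lt_add_one k), h1, h2⟩
    obtain ⟨i, hi, h1, h2⟩ := key m le_rfl (hcm ▸ x.isLt)
    exact ⟨⟨i, hi⟩, h1, h2⟩
  · intro i
    have himg : Fin.val '' (B i) = Set.Ico (c i.val) (c (i.val + 1)) := by
      ext y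
      constructor
      · rintro ⟨x, ⟨h1, h2⟩, rfl⟩; exact ⟨h1, h2⟩
      · rintro ⟨h1, h2⟩
        exact ⟨⟨y, h2.trans_le (hub i)⟩, ⟨h1, h2⟩, rfl⟩
    have := Set.ncard_image_of_injective (B i) Fin.val_injective
    rw [himg] at this
    rw [← this, ← Finset.coe_Ico, Set.ncard_coe_finset, Nat.card_Ico, hcs]
    simp [hn', i.isLt]

/-- The value `μ(λ, m; t)`, the maximum over all partitions of a
`λ`-element set into `m` disjoint blocks of the minimum, over all choices of `t`
blocks, of the number of elements outside those `t` blocks, equals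
`(m-t)·⌊λ/m⌋` if `t ≥ λ - m·⌊λ/m⌋`, and
`(m-t)·⌊λ/m⌋ + (λ - m·⌊λ/m⌋ - t)` otherwise. -/
theorem stmt_5 (lam m t : ℕ) (hlam : 0 < lam) (hm : 0 < m) (ht : 0 < t)
    (htm : t ≤ m) :
    sSup {k | ∃ B : Fin m → Set (Fin lam),
        (Pairwise fun i j => Disjoint (B i) (B j)) ∧
        (⋃ i, B i) = Set.univ ∧
        k = sInf {r | ∃ T : Finset (Fin m), T.card = t ∧
            r = (Set.univ \ ⋃ i ∈ T, B i).ncard}} =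
      if lam - m * (lam / m) ≤ t then (m - t) * (lam / m)
      else (m - t) * (lam / m) + (lam - m * (lam / m) - t) := by
  classical
  have hdm := Nat.div_add_mod lam m
  set q := lam / m with hq
  set r := lam % m with hr
  have hrm : r < m := Nat.mod_lt _ hm
  have hR : lam - m * q = r := by omega
  set target := (m - t) * q + (r - t) with htarget
  have hRHS : (if lam - m * q ≤ t then (m - t) * q
      else (m - t) * q + (lam - m * q - t)) = target := by
    rw [hR]
    split_ifs with h
    · have : r - t = 0 := Nat.sub_eq_zero_of_le h
      omega
    · rfl
  rw [hRHS]
  have h2 : (m - t) * q + t * q = m * q := by rw [← Nat.add_mul, Nat.sub_add_cancel htm]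
  have hkey : target = lam - (t * q + min t r) := by omega
  set S := {k | ∃ B : Fin m → Set (Fin lam),
        (Pairwise fun i j => Disjoint (B i) (B j)) ∧
        (⋃ i, B i) = Set.univ ∧
        k = sInf {r | ∃ T : Finset (Fin m), T.card = t ∧
            r = (Set.univ \ ⋃ i ∈ T, B i).ncard}} with hS
  -- upper bound
  have hub : ∀ k ∈ S, k ≤ target := by
    rintro k ⟨B, hdisj, hcover, rfl⟩
    have hsum := sum_ncard_eq B hdisj hcover
    obtain ⟨T, hT, hge⟩ := exists_big_subset m t lam htm (fun i => (B i).ncard) hsum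
    have hmem : (Set.univ \ ⋃ i ∈ T, B i).ncard ∈
        {r | ∃ T : Finset (Fin m), T.card = t ∧
          r = (Set.univ \ ⋃ i ∈ T, B i).ncard} := ⟨T, hT, rfl⟩
    refine le_trans (Nat.sInf_le hmem) ?_
    rw [ncard_compl_biUnion B hdisj, hkey]
    exact Nat.sub_le_sub_left hge lam
  -- the balanced partition
  set n : Fin m → ℕ := fun i => q + if (i : ℕ) < r then 1 else 0 with hn
  have hsumn : ∑ i, n i = lam := by
    have h1 : ∑ i : Fin m, (q + if (i : ℕ) < r then 1 else 0)
        = ∑ j ∈ Finset.range m, (q + if j < r then 1 else 0) :=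
      Fin.sum_univ_eq_sum_range (fun j => q + if j < r then 1 else 0) m
    have h0 : ∑ i, n i = ∑ i : Fin m, (q + if (i : ℕ) < r then 1 else 0) := rfl
    rw [h0, h1, sum_sizes_eq, min_eq_right hrm.le]
    omega
  obtain ⟨B, hdisj, hcover, hcard⟩ := exists_partition lam m n hsumn
  -- sum bound for any T of card t
  have hsumT : ∀ T : Finset (Fin m), T.card = t → ∑ i ∈ T, n i ≤ t * q + min t r := by
    intro T hT
    have h0 : ∑ i ∈ T, n i = ∑ i ∈ T, (q + if (i : ℕ) < r then 1 else 0) := rfl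
    rw [h0, Finset.sum_add_distrib, Finset.sum_const, smul_eq_mul, hT,
      ← Finset.card_filter]
    have hfle : (T.filter fun i : Fin m => (i : ℕ) < r).card ≤ min t r := by
      refine le_min ?_ ?_
      · exact hT ▸ Finset.card_le_card (Finset.filter_subset _ _)
      · have h2 : (T.filter fun i : Fin m => (i : ℕ) < r).card ≤ (Finset.range r).card :=
          Finset.card_le_card_of_injOn (fun i => (i : ℕ))
            (fun i hi => Finset.mem_range.mpr (Finset.mem_filter.mp hi).2)
            (fun a _ b _ h => Fin.val_injective h)
        simpa using h2
    exact Nat.add_le_add_left hfle _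
  -- the specific good T
  set T0 : Finset (Fin m) := Finset.univ.image (Fin.castLE htm) with hT0
  have hT0card : T0.card = t := by
    rw [hT0, Finset.card_image_of_injective _ (Fin.castLE_injective htm)]
    simp
  have hT0sum : ∑ i ∈ T0, n i = t * q + min t r := by
    rw [hT0, Finset.sum_image (fun a _ b _ h => Fin.castLE_injective htm h)]
    have h2 : ∑ i : Fin t, (q + if (i : ℕ) < r then 1 else 0)
        = ∑ j ∈ Finset.range t, (q + if j < r then 1 else 0) :=
      Fin.sum_univ_eq_sum_range (fun j => q + if j < r then 1 else 0) t
    have h1 : ∑ i : Fin t, n (Fin.castLE htm i)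
        = ∑ i : Fin t, (q + if (i : ℕ) < r then 1 else 0) :=
      Finset.sum_congr rfl fun i _ => by simp [hn]
    rw [h1, h2, sum_sizes_eq]
  -- the inner sInf for B equals target
  have hsumB : ∀ T : Finset (Fin m), ∑ i ∈ T, (B i).ncard = ∑ i ∈ T, n i :=
    fun T => Finset.sum_congr rfl fun i _ => hcard i
  have hInf : sInf {r | ∃ T : Finset (Fin m), T.card = t ∧
      r = (Set.univ \ ⋃ i ∈ T, B i).ncard} = target := by
    have hmem0 : (Set.univ \ ⋃ i ∈ T0, B i).ncard ∈
        {r | ∃ T : Finset (Fin m), T.card = t ∧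
          r = (Set.univ \ ⋃ i ∈ T, B i).ncard} := ⟨T0, hT0card, rfl⟩
    have hval0 : (Set.univ \ ⋃ i ∈ T0, B i).ncard = target := by
      rw [ncard_compl_biUnion B hdisj, hsumB, hT0sum, hkey]
    refine le_antisymm (hval0 ▸ Nat.sInf_le hmem0) ?_
    refine le_csInf ⟨_, hmem0⟩ ?_
    rintro x ⟨T, hT, rfl⟩
    rw [ncard_compl_biUnion B hdisj, hsumB, hkey]
    exact Nat.sub_le_sub_left (hsumT T hT) lam
  have hmemS : target ∈ S := ⟨B, hdisj, hcover, hInf.symm⟩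
  exact le_antisymm (csSup_le ⟨target, hmemS⟩ hub) (le_csSup ⟨target, hub⟩ hmemS)
end

section
/- There is no (2+1)-color connected colored edge graph G(V,E,C,f) with |V| = 4 and |C| = 4. -/
/-!
Keeping any two of the four colours leaves a connected graph on four vertices, so every two
colour classes together contain at least three edges. Four natural numbers whose pairwise sums
are all at least 3 add up to at least 7, but a simple graph on four vertices has only 6 edges.
-/

open SimpleGraph Finset

variable {V C : Type*} [Fintype V] [DecidableEq C]

def SimpleGraph.colorClass_s8 (G : SimpleGraph V) [DecidableRel G.Adj] (f : Sym2 V → C) (c : C) :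
    Finset (Sym2 V) :=
  {e ∈ G.edgeFinset | f e = c}

lemma SimpleGraph.sum_card_colorClass [Fintype C] (G : SimpleGraph V) [DecidableRel G.Adj]
    (f : Sym2 V → C) : ∑ c, #(G.colorClass_s8 f c) = #G.edgeFinset :=
  (card_eq_sum_card_fiberwise fun e _ => mem_univ (f e)).symm

lemma SimpleGraph.Connected.card_vert_le_card_colorClass_add_card_colorClass_add_one
    {G : SimpleGraph V} [DecidableRel G.Adj] {f : Sym2 V → C} {a b : C}
    (h : (G.deleteEdges (f ⁻¹' {a, b}ᶜ)).Connected) :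
    Fintype.card V ≤ #(G.colorClass_s8 f a) + #(G.colorClass_s8 f b) + 1 := by
  classical
  have hedges : (G.deleteEdges (f ⁻¹' {a, b}ᶜ)).edgeFinset
      = G.colorClass_s8 f a ∪ G.colorClass_s8 f b := by
    ext e
    simp [colorClass_s8, ← filter_or]
  have hcard := h.card_vert_le_card_edgeSet_add_one
  rw [Nat.card_eq_fintype_card, Nat.card_eq_fintype_card, ← edgeFinset_card, hedges] at hcard
  have := card_union_le (G.colorClass_s8 f a) (G.colorClass_s8 f b)
  omega

lemma seven_le_sum_of_three_le_add (n : Fin 4 → ℕ) (h : ∀ a b, a ≠ b → 3 ≤ n a + n b) :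
    7 ≤ ∑ c, n c := by
  rw [Fin.sum_univ_four]
  have := h 0 1 (by decide); have := h 0 2 (by decide); have := h 0 3 (by decide)
  have := h 1 2 (by decide); have := h 1 3 (by decide); have := h 2 3 (by decide)
  omega

/-- There is no `(2+1)`-color connected colored edge graph with
`|V| = 4` and `|C| = 4`. -/
theorem stmt_8 :
    ¬ ∃ (G : SimpleGraph (Fin 4)) (f : Sym2 (Fin 4) → Fin 4),
        (∀ c : Fin 4, ∃ e ∈ G.edgeSet, f e = c) ∧
        ∀ Ct : Finset (Fin 4), Ct.card = 2 →
          ∀ A B : Fin 4, (G.deleteEdges (f ⁻¹' ↑Ct)).Reachable A B := by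
  classical
  rintro ⟨G, f, -, hconn⟩
  have hpair (a b : Fin 4) (hab : a ≠ b) : 3 ≤ #(G.colorClass_s8 f a) + #(G.colorClass_s8 f b) := by
    have hreach := hconn {a, b}ᶜ (by rw [card_compl, card_pair hab]; rfl)
    rw [coe_compl, coe_pair] at hreach
    simpa using (Connected.mk hreach).card_vert_le_card_colorClass_add_card_colorClass_add_one
  have htot : #G.edgeFinset ≤ 6 :=
    G.card_edgeFinset_le_card_choose_two.trans_eq (by simp [Nat.choose])
  have hsum := seven_le_sum_of_three_le_add _ hpair
  rw [G.sum_card_colorClass f] at hsum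
  omega
end

section
/- Let t = 1, m ≥ 3, and m < n ≤ 2m−2. The colored edge graph on vertices v_1,…,v_n with edge set {(v_1,v_2),…,(v_{m−1},v_m),(v_m,v_1)} ∪ {(v_m,v_{m+1}),(v_{m+1},v_{m+2}),…,(v_{n−1},v_n),(v_n,v_1)}, colored by f(v_i,v_{i+1}) = c_i for 1 ≤ i ≤ m−1, f(v_m,v_1) = c_m, f(v_{m+i−1},v_{m+i}) = c_i for 1 ≤ i ≤ n−m, and f(v_n,v_1) = c_{n−m+1}, is (1+1)-color connected. -/
/-- For `t = 1`, `m ≥ 3` and `m < n ≤ 2m - 2`, the colored edge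
graph consisting of the `m`-cycle `v_1, …, v_m, v_1` together with the path
`v_m, v_{m+1}, …, v_n, v_1`, with colors
`f(v_i, v_{i+1}) = c_i` for `1 ≤ i ≤ m-1`, `f(v_m, v_1) = c_m`,
`f(v_{m+i-1}, v_{m+i}) = c_i` for `1 ≤ i ≤ n-m`, and `f(v_n, v_1) = c_{n-m+1}`,
is `(1+1)`-color connected.  (Vertices are 0-indexed: `vv i` is `v_{i+1}`,
`cc i` is `c_{i+1}`.) -/
theorem stmt_11 (m n : ℕ) (hm : 3 ≤ m) (h1 : m < n) (h2 : n ≤ 2 * m - 2)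
    (vv : ℕ → Fin n) (hvv : ∀ i, (vv i : ℕ) = i % n)
    (cc : ℕ → Fin m) (hcc : ∀ i, (cc i : ℕ) = i % m)
    (f : Sym2 (Fin n) → Fin m)
    (hf1 : ∀ i : ℕ, i + 2 ≤ m → f s(vv i, vv (i + 1)) = cc i)
    (hf2 : f s(vv (m - 1), vv 0) = cc (m - 1))
    (hf3 : ∀ i : ℕ, 1 ≤ i → i ≤ n - m →
        f s(vv (m + i - 2), vv (m + i - 1)) = cc (i - 1))
    (hf4 : f s(vv (n - 1), vv 0) = cc (n - m)) :
    ∀ Ct : Finset (Fin m), Ct.card = 1 → ∀ A B : Fin n,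
      ((SimpleGraph.fromEdgeSet
          ({e : Sym2 (Fin n) | ∃ i : ℕ, i + 2 ≤ m ∧ e = s(vv i, vv (i + 1))} ∪
           {s(vv (m - 1), vv 0)} ∪
           {e : Sym2 (Fin n) | ∃ i : ℕ, 1 ≤ i ∧ i ≤ n - m ∧
              e = s(vv (m + i - 2), vv (m + i - 1))} ∪
           {s(vv (n - 1), vv 0)})).deleteEdges (f ⁻¹' ↑Ct)).Reachable A B := by
  intro Ct hCt A B
  obtain ⟨c, rfl⟩ := Finset.card_eq_one.mp hCt
  set cv := (c : ℕ) with hcvdef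
  have hcv : cv < m := c.isLt
  set G := ((SimpleGraph.fromEdgeSet
          ({e : Sym2 (Fin n) | ∃ i : ℕ, i + 2 ≤ m ∧ e = s(vv i, vv (i + 1))} ∪
           {s(vv (m - 1), vv 0)} ∪
           {e : Sym2 (Fin n) | ∃ i : ℕ, 1 ≤ i ∧ i ≤ n - m ∧
              e = s(vv (m + i - 2), vv (m + i - 1))} ∪
           {s(vv (n - 1), vv 0)})).deleteEdges (f ⁻¹' ↑({c} : Finset (Fin m)))) with hG
  have hv : ∀ i, i < n → (vv i : ℕ) = i := fun i hi => by
    rw [hvv i]; exact Nat.mod_eq_of_lt hi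
  -- single step along the outer cycle
  have step : ∀ j : ℕ, j + 1 < n → (if j + 2 ≤ m then j else j + 1 - m) ≠ cv →
      G.Adj (vv j) (vv (j + 1)) := by
    intro j hj hne
    rw [hG, SimpleGraph.deleteEdges_adj, SimpleGraph.fromEdgeSet_adj]
    have hvj : (vv j : ℕ) = j := hv j (by omega)
    have hvj1 : (vv (j + 1) : ℕ) = j + 1 := hv (j + 1) hj
    have hvne : vv j ≠ vv (j + 1) := fun h => by
      rw [Fin.ext_iff, hvj, hvj1] at h; omega
    by_cases hjm : j + 2 ≤ m
    · rw [if_pos hjm] at hne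
      refine ⟨⟨?_, hvne⟩, ?_⟩
      · simp only [Set.mem_union]
        exact Or.inl (Or.inl (Or.inl ⟨j, hjm, rfl⟩))
      · intro hmem
        simp only [Set.mem_preimage, Finset.coe_singleton, Set.mem_singleton_iff] at hmem
        rw [hf1 j hjm] at hmem
        have h1 := hcc j
        rw [hmem, Nat.mod_eq_of_lt (by omega)] at h1
        exact hne h1.symm
    · rw [if_neg hjm] at hne
      refine ⟨⟨?_, hvne⟩, ?_⟩
      · simp only [Set.mem_union]
        refine Or.inl (Or.inr ⟨j + 2 - m, by omega, by omega, ?_⟩)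
        rw [show m + (j + 2 - m) - 2 = j by omega, show m + (j + 2 - m) - 1 = j + 1 by omega]
      · intro hmem
        simp only [Set.mem_preimage, Finset.coe_singleton, Set.mem_singleton_iff] at hmem
        have h3 := hf3 (j + 2 - m) (by omega) (by omega)
        rw [show m + (j + 2 - m) - 2 = j by omega,
          show m + (j + 2 - m) - 1 = j + 1 by omega] at h3
        rw [h3] at hmem
        have h1 := hcc (j + 2 - m - 1)
        rw [hmem, Nat.mod_eq_of_lt (by omega)] at h1
        omega
  -- the chord (m-1, 0)
  have hA2 : cv ≠ m - 1 → G.Adj (vv (m - 1)) (vv 0) := by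
    intro hne
    rw [hG, SimpleGraph.deleteEdges_adj, SimpleGraph.fromEdgeSet_adj]
    have hv1 : (vv (m - 1) : ℕ) = m - 1 := hv _ (by omega)
    have hv0 : (vv 0 : ℕ) = 0 := hv 0 (by omega)
    refine ⟨⟨?_, fun h => by rw [Fin.ext_iff, hv1, hv0] at h; omega⟩, ?_⟩
    · simp only [Set.mem_union]
      exact Or.inl (Or.inl (Or.inr rfl))
    · intro hmem
      simp only [Set.mem_preimage, Finset.coe_singleton, Set.mem_singleton_iff] at hmem
      rw [hf2] at hmem
      have h1 := hcc (m - 1)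
      rw [hmem, Nat.mod_eq_of_lt (by omega)] at h1
      omega
  -- the edge (n-1, 0)
  have hA4 : n - m ≠ cv → G.Adj (vv (n - 1)) (vv 0) := by
    intro hne
    rw [hG, SimpleGraph.deleteEdges_adj, SimpleGraph.fromEdgeSet_adj]
    have hv1 : (vv (n - 1) : ℕ) = n - 1 := hv _ (by omega)
    have hv0 : (vv 0 : ℕ) = 0 := hv 0 (by omega)
    refine ⟨⟨?_, fun h => by rw [Fin.ext_iff, hv1, hv0] at h; omega⟩, ?_⟩
    · simp only [Set.mem_union]
      exact Or.inr rfl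
    · intro hmem
      simp only [Set.mem_preimage, Finset.coe_singleton, Set.mem_singleton_iff] at hmem
      rw [hf4] at hmem
      have h1 := hcc (n - m)
      rw [hmem, Nat.mod_eq_of_lt (by omega)] at h1
      omega
  -- walking forward along the outer cycle
  have reach_fwd : ∀ (d a : ℕ), a + d < n →
      (∀ j, a ≤ j → j < a + d → (if j + 2 ≤ m then j else j + 1 - m) ≠ cv) →
      G.Reachable (vv a) (vv (a + d)) := by
    intro d
    induction d with
    | zero => intro a _ _; exact SimpleGraph.Reachable.refl _
    | succ d ih =>
      intro a h hcol
      have r1 := ih a (by omega) (fun j hj hj2 => hcol j hj (by omega))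
      have r2 := step (a + d) (by omega) (hcol (a + d) (by omega) (by omega))
      exact r1.trans r2.reachable
  have key : ∀ k, k < n → G.Reachable (vv k) (vv 0) := by
    intro k hk
    by_cases hc1 : cv = m - 1
    · have r := reach_fwd k 0 (by omega) (fun j hj1 hj2 => by split <;> omega)
      simpa using r.symm
    · by_cases hk1 : k ≤ cv
      · have r := reach_fwd k 0 (by omega) (fun j hj1 hj2 => by split <;> omega)
        simpa using r.symm
      · by_cases hk2 : k ≤ m - 1
        · have r1 := reach_fwd (m - 1 - k) k (by omega) (fun j hj1 hj2 => by split <;> omega)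
          rw [show k + (m - 1 - k) = m - 1 by omega] at r1
          exact r1.trans (hA2 (by omega)).reachable
        · by_cases hk3 : k ≤ m - 1 + cv
          · have r1 := reach_fwd (k - (m - 1)) (m - 1) (by omega)
              (fun j hj1 hj2 => by split <;> omega)
            rw [show m - 1 + (k - (m - 1)) = k by omega] at r1
            exact r1.symm.trans (hA2 (by omega)).reachable
          · have r1 := reach_fwd (n - 1 - k) k (by omega)
              (fun j hj1 hj2 => by split <;> omega)
            rw [show k + (n - 1 - k) = n - 1 by omega] at r1
            exact r1.trans (hA4 (by omega)).reachable
  have hA : vv (A : ℕ) = A := Fin.ext (hv _ A.2)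
  have hB : vv (B : ℕ) = B := Fin.ext (hv _ B.2)
  rw [← hA, ← hB]
  exact (key _ A.2).trans (key _ B.2).symm
end

section
/- For every m ≥ 2 and k ≥ 1, the colored edge graph on n = (m−1)k+1 vertices {v_0, v_1, …, v_{(m−1)k}} with edge color classes E_1 = {(v_0, v_{(m−1)i+1}) : 0 ≤ i ≤ k−1}, E_j = {(v_{(m−1)i+j−1}, v_{(m−1)i+j}) : 0 ≤ i ≤ k−1} for 2 ≤ j ≤ m−1, and E_m = {(v_{(m−1)i}, v_0) : 1 ≤ i ≤ k} (edges in E_j colored c_j), is (1+1)-color connected and has exactly mk edges. -/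
/-- For `m ≥ 2` and `k ≥ 1`, the colored edge graph on
`n = (m-1)k + 1` vertices `v_0, …, v_{(m-1)k}` with color classes
`E_1 = {(v_0, v_{(m-1)i+1}) : 0 ≤ i ≤ k-1}` (color `c_1`),
`E_j = {(v_{(m-1)i+j-1}, v_{(m-1)i+j}) : 0 ≤ i ≤ k-1}` for `2 ≤ j ≤ m-1`
(color `c_j`), and `E_m = {(v_{(m-1)i}, v_0) : 1 ≤ i ≤ k}` (color `c_m`)
is `(1+1)`-color connected and has exactly `mk` edges.
(`vv i` is `v_i`, `cc j` is `c_{j+1}`.) -/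
theorem stmt_12 (m k : ℕ) (hm : 2 ≤ m) (hk : 1 ≤ k)
    (vv : ℕ → Fin ((m - 1) * k + 1)) (hvv : ∀ i, (vv i : ℕ) = i % ((m - 1) * k + 1))
    (cc : ℕ → Fin m) (hcc : ∀ i, (cc i : ℕ) = i % m)
    (f : Sym2 (Fin ((m - 1) * k + 1)) → Fin m)
    (hf1 : ∀ i : ℕ, i ≤ k - 1 → f s(vv 0, vv ((m - 1) * i + 1)) = cc 0)
    (hf2 : ∀ j : ℕ, 2 ≤ j → j ≤ m - 1 → ∀ i : ℕ, i ≤ k - 1 →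
        f s(vv ((m - 1) * i + j - 1), vv ((m - 1) * i + j)) = cc (j - 1))
    (hf3 : ∀ i : ℕ, 1 ≤ i → i ≤ k → f s(vv ((m - 1) * i), vv 0) = cc (m - 1)) :
    (∀ Ct : Finset (Fin m), Ct.card = 1 →
      ∀ A B : Fin ((m - 1) * k + 1),
        ((SimpleGraph.fromEdgeSet
            ({e | ∃ i : ℕ, i ≤ k - 1 ∧ e = s(vv 0, vv ((m - 1) * i + 1))} ∪
             {e | ∃ j : ℕ, 2 ≤ j ∧ j ≤ m - 1 ∧ ∃ i : ℕ, i ≤ k - 1 ∧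
                e = s(vv ((m - 1) * i + j - 1), vv ((m - 1) * i + j))} ∪
             {e | ∃ i : ℕ, 1 ≤ i ∧ i ≤ k ∧ e = s(vv ((m - 1) * i), vv 0)})).deleteEdges
            (f ⁻¹' ↑Ct)).Reachable A B) ∧
    (SimpleGraph.fromEdgeSet
        ({e | ∃ i : ℕ, i ≤ k - 1 ∧ e = s(vv 0, vv ((m - 1) * i + 1))} ∪
         {e | ∃ j : ℕ, 2 ≤ j ∧ j ≤ m - 1 ∧ ∃ i : ℕ, i ≤ k - 1 ∧
            e = s(vv ((m - 1) * i + j - 1), vv ((m - 1) * i + j))} ∪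
         {e | ∃ i : ℕ, 1 ≤ i ∧ i ≤ k ∧ e = s(vv ((m - 1) * i), vv 0)})).edgeSet.ncard
      = m * k := by
  rcases eq_or_lt_of_le hm with hm2 | hm3
  · -- m = 2 : hypotheses contradictory
    exfalso
    have hm2' : m = 2 := hm2.symm
    subst hm2'
    have h1 := hf1 0 (Nat.zero_le _)
    have h3 := hf3 1 le_rfl hk
    norm_num at h1 h3
    rw [Sym2.eq_swap] at h3
    rw [h1] at h3
    have c0 := hcc 0
    have c1 := hcc 1
    rw [h3] at c0
    omega
  · -- m ≥ 3
    set S : Set (Sym2 (Fin ((m - 1) * k + 1))) :=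
        ({e | ∃ i : ℕ, i ≤ k - 1 ∧ e = s(vv 0, vv ((m - 1) * i + 1))} ∪
         {e | ∃ j : ℕ, 2 ≤ j ∧ j ≤ m - 1 ∧ ∃ i : ℕ, i ≤ k - 1 ∧
            e = s(vv ((m - 1) * i + j - 1), vv ((m - 1) * i + j))} ∪
         {e | ∃ i : ℕ, 1 ≤ i ∧ i ≤ k ∧ e = s(vv ((m - 1) * i), vv 0)}) with hS
    have hm1 : 1 ≤ m - 1 := by omega
    have vval : ∀ x, x < (m - 1) * k + 1 → (vv x : ℕ) = x := fun x hx => by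
      rw [hvv, Nat.mod_eq_of_lt hx]
    have vne : ∀ x y, x < (m - 1) * k + 1 → y < (m - 1) * k + 1 → x ≠ y → vv x ≠ vv y := by
      intro x y hx hy hxy h
      exact hxy (by rw [← vval x hx, ← vval y hy, h])
    have vinj : ∀ x y, x < (m - 1) * k + 1 → y < (m - 1) * k + 1 → vv x = vv y → x = y := by
      intro x y hx hy h
      by_contra hne
      exact vne x y hx hy hne h
    have ccv : ∀ t, t < m → (cc t : ℕ) = t := fun t ht => by rw [hcc, Nat.mod_eq_of_lt ht]
    have bound : ∀ i j, i ≤ k - 1 → j ≤ m - 1 → (m - 1) * i + j ≤ (m - 1) * k := by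
      intro i j hi hj
      have h1 := Nat.mul_le_mul_left (m - 1) hi
      have h2 : (m - 1) * (k - 1) + (m - 1) = (m - 1) * k := by
        rw [← Nat.mul_succ]
        congr 1
        omega
      omega
    -- membership lemmas
    have mem1 : ∀ i, i < k → s(vv 0, vv ((m - 1) * i + 1)) ∈ S := by
      intro i hi
      exact Or.inl (Or.inl ⟨i, by omega, rfl⟩)
    have mem2 : ∀ i, i < k → ∀ j, 1 ≤ j → j ≤ m - 2 →
        s(vv ((m - 1) * i + j), vv ((m - 1) * i + j + 1)) ∈ S := by
      intro i hi j hj1 hj2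
      refine Or.inl (Or.inr ⟨j + 1, by omega, by omega, i, by omega, ?_⟩)
      have e1 : (m - 1) * i + (j + 1) - 1 = (m - 1) * i + j := by omega
      have e2 : (m - 1) * i + (j + 1) = (m - 1) * i + j + 1 := by omega
      rw [e1, e2]
    have mem3 : ∀ i, i < k → s(vv ((m - 1) * i + (m - 1)), vv 0) ∈ S := by
      intro i hi
      refine Or.inr ⟨i + 1, by omega, by omega, ?_⟩
      have e1 : (m - 1) * (i + 1) = (m - 1) * i + (m - 1) := by rw [Nat.mul_succ]
      rw [e1]
    -- color lemmas
    have col1 : ∀ i, i < k → f s(vv 0, vv ((m - 1) * i + 1)) = cc 0 := fun i hi =>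
      hf1 i (by omega)
    have col2 : ∀ i, i < k → ∀ j, 1 ≤ j → j ≤ m - 2 →
        f s(vv ((m - 1) * i + j), vv ((m - 1) * i + j + 1)) = cc j := by
      intro i hi j hj1 hj2
      have h := hf2 (j + 1) (by omega) (by omega) i (by omega)
      have e1 : (m - 1) * i + (j + 1) - 1 = (m - 1) * i + j := by omega
      have e2 : (m - 1) * i + (j + 1) = (m - 1) * i + j + 1 := by omega
      have e3 : j + 1 - 1 = j := by omega
      rw [e1, e2, e3] at h
      exact h
    have col3 : ∀ i, i < k → f s(vv ((m - 1) * i + (m - 1)), vv 0) = cc (m - 1) := by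
      intro i hi
      have h := hf3 (i + 1) (by omega) (by omega)
      have e1 : (m - 1) * (i + 1) = (m - 1) * i + (m - 1) := by rw [Nat.mul_succ]
      rw [e1] at h
      exact h
    constructor
    ·
      intro Ct hCt A B
      obtain ⟨c, rfl⟩ := Finset.card_eq_one.mp hCt
      set G' := (SimpleGraph.fromEdgeSet S).deleteEdges (f ⁻¹' ↑({c} : Finset (Fin m))) with hG'
      have hadj : ∀ a b : Fin ((m - 1) * k + 1), s(a, b) ∈ S → a ≠ b → f s(a, b) ≠ c →
          G'.Adj a b := by
        intro a b h1 h2 h3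
        rw [hG', SimpleGraph.deleteEdges_adj, SimpleGraph.fromEdgeSet_adj]
        refine ⟨⟨h1, h2⟩, ?_⟩
        simpa using h3
      -- concrete adjacencies
      have adj1 : ∀ i, i < k → (0 : ℕ) ≠ (c : ℕ) → G'.Adj (vv 0) (vv ((m - 1) * i + 1)) := by
        intro i hi hne
        refine hadj _ _ (mem1 i hi) (vne 0 _ (by omega) (by
          have := bound i 1 (by omega) (by omega); omega) (by omega)) ?_
        rw [col1 i hi]
        intro h
        exact hne (by rw [← ccv 0 (by omega), h])
      have adj2 : ∀ i, i < k → ∀ j, 1 ≤ j → j ≤ m - 2 → (j : ℕ) ≠ (c : ℕ) →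
          G'.Adj (vv ((m - 1) * i + j)) (vv ((m - 1) * i + j + 1)) := by
        intro i hi j hj1 hj2 hne
        have hb := bound i (j + 1) (by omega) (by omega)
        refine hadj _ _ (mem2 i hi j hj1 hj2) (vne _ _ (by omega) (by omega) (by omega)) ?_
        rw [col2 i hi j hj1 hj2]
        intro h
        exact hne (by rw [← ccv j (by omega), h])
      have adj3 : ∀ i, i < k → (m - 1 : ℕ) ≠ (c : ℕ) →
          G'.Adj (vv ((m - 1) * i + (m - 1))) (vv 0) := by
        intro i hi hne
        have hb := bound i (m - 1) (by omega) (by omega)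
        refine hadj _ _ (mem3 i hi) (vne _ _ (by omega) (by omega) (by omega)) ?_
        rw [col3 i hi]
        intro h
        exact hne (by rw [← ccv (m - 1) (by omega), h])
      -- forward reachability
      have reachF : ∀ i, i < k → ∀ j, 1 ≤ j → j ≤ m - 1 → j ≤ (c : ℕ) →
          G'.Reachable (vv 0) (vv ((m - 1) * i + j)) := by
        intro i hi j
        induction j with
        | zero => omega
        | succ j ih =>
          intro _ h2 h3
          rcases Nat.eq_zero_or_pos j with hj0 | hj1
          · subst hj0
            exact (adj1 i hi (by omega)).reachable
          · have hr := ih (by omega) (by omega) (by omega)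
            have ha := adj2 i hi j hj1 (by omega) (by omega)
            have e : (m - 1) * i + (j + 1) = (m - 1) * i + j + 1 := by omega
            rw [e]
            exact hr.trans ha.reachable
      -- backward reachability
      have reachB : ∀ d i, i < k → ∀ j, 1 ≤ j → j ≤ m - 1 → m - 1 - j = d → (c : ℕ) < j →
          G'.Reachable (vv 0) (vv ((m - 1) * i + j)) := by
        intro d
        induction d with
        | zero =>
          intro i hi j hj1 hj2 hd hc
          have hj : j = m - 1 := by omega
          subst hj
          exact (adj3 i hi (by omega)).reachable.symm
        | succ d ih =>
          intro i hi j hj1 hj2 hd hc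
          have hr := ih i hi (j + 1) (by omega) (by omega) (by omega) (by omega)
          have ha := adj2 i hi j hj1 (by omega) (by omega)
          have e : (m - 1) * i + (j + 1) = (m - 1) * i + j + 1 := by omega
          rw [e] at hr
          exact hr.trans ha.reachable.symm
      -- every vertex reachable from vv 0
      have key : ∀ A : Fin ((m - 1) * k + 1), G'.Reachable (vv 0) A := by
        intro A
        rcases Nat.eq_zero_or_pos (A : ℕ) with h0 | h1
        · have hA : A = vv 0 := by
            apply Fin.ext
            rw [vval 0 (by omega), h0]
          rw [hA]
        · have hAlt : (A : ℕ) < (m - 1) * k + 1 := A.isLt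
          set x := (A : ℕ) with hx
          have hd := Nat.div_add_mod (x - 1) (m - 1)
          have hmod : (x - 1) % (m - 1) < m - 1 := Nat.mod_lt _ (by omega)
          set i := (x - 1) / (m - 1) with hi
          set r := (x - 1) % (m - 1) with hr
          have hxe : x = (m - 1) * i + (r + 1) := by omega
          have hik : i < k := by
            by_contra hik
            have : (m - 1) * k ≤ (m - 1) * i := Nat.mul_le_mul_left _ (by omega)
            omega
          have hA : A = vv ((m - 1) * i + (r + 1)) := by
            apply Fin.ext
            rw [vval _ (by omega), ← hxe]
          rw [hA]
          rcases le_or_gt (r + 1) (c : ℕ) with hle | hlt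
          · exact reachF i hik (r + 1) (by omega) (by omega) hle
          · exact reachB (m - 1 - (r + 1)) i hik (r + 1) (by omega) (by omega) rfl hlt
      exact (key A).symm.trans (key B)
    ·
      -- the parametrization
      set g : Fin k × Fin m → Sym2 (Fin ((m - 1) * k + 1)) := fun p =>
        if (p.2 : ℕ) = 0 then s(vv 0, vv ((m - 1) * (p.1 : ℕ) + 1))
        else if (p.2 : ℕ) = m - 1 then s(vv ((m - 1) * (p.1 : ℕ) + (m - 1)), vv 0)
        else s(vv ((m - 1) * (p.1 : ℕ) + (p.2 : ℕ)), vv ((m - 1) * (p.1 : ℕ) + (p.2 : ℕ) + 1))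
        with hg
      have hfg : ∀ p : Fin k × Fin m, f (g p) = cc (p.2 : ℕ) := by
        rintro ⟨i, j⟩
        by_cases h0 : (j : ℕ) = 0
        · have hgv : g (i, j) = s(vv 0, vv ((m - 1) * (i : ℕ) + 1)) := by
            simp only [hg]; exact if_pos h0
          rw [hgv, h0]
          exact col1 i i.isLt
        · by_cases hlast : (j : ℕ) = m - 1
          · have hgv : g (i, j) = s(vv ((m - 1) * (i : ℕ) + (m - 1)), vv 0) := by
              simp only [hg]; rw [if_neg h0, if_pos hlast]
            rw [hgv, hlast]
            exact col3 i i.isLt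
          · have hjlt : (j : ℕ) < m := j.isLt
            simp only [hg, if_neg h0, if_neg hlast]
            exact col2 i i.isLt (j : ℕ) (by omega) (by omega)
      have hgS : ∀ p : Fin k × Fin m, g p ∈ S := by
        rintro ⟨i, j⟩
        by_cases h0 : (j : ℕ) = 0
        · simp only [hg, if_pos h0]
          exact mem1 i i.isLt
        · by_cases hlast : (j : ℕ) = m - 1
          · simp only [hg, if_neg h0, if_pos hlast]
            exact mem3 i i.isLt
          · have hjlt : (j : ℕ) < m := j.isLt
            simp only [hg, if_neg h0, if_neg hlast]
            exact mem2 i i.isLt (j : ℕ) (by omega) (by omega)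
      have hSg : ∀ e ∈ S, ∃ p : Fin k × Fin m, g p = e := by
        intro e he
        rw [hS] at he
        rcases he with ((⟨i, hi, rfl⟩ | ⟨j, hj2, hjm, i, hi, rfl⟩) | ⟨i, hi1, hik, rfl⟩)
        · exact ⟨(⟨i, by omega⟩, ⟨0, by omega⟩), by simp only [hg, if_pos rfl]⟩
        · refine ⟨(⟨i, by omega⟩, ⟨j - 1, by omega⟩), ?_⟩
          have h0 : ¬ (j - 1 = 0) := by omega
          by_cases hlast : j - 1 = m - 1
          · exfalso; omega
          · simp only [hg, if_neg h0, if_neg hlast]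
            have e1 : (m - 1) * i + (j - 1) = (m - 1) * i + j - 1 := by omega
            rw [e1]
            rw [show (m - 1) * i + j - 1 + 1 = (m - 1) * i + j from by omega]
        · refine ⟨(⟨i - 1, by omega⟩, ⟨m - 1, by omega⟩), ?_⟩
          have h0 : ¬ (m - 1 = 0) := by omega
          simp only [hg, if_neg h0, if_pos rfl]
          have e1 : (m - 1) * (i - 1) + (m - 1) = (m - 1) * i := by
            have : (m - 1) * (i - 1) + (m - 1) = (m - 1) * (i - 1 + 1) := by rw [Nat.mul_succ]
            rw [this]
            congr 1
            omega
          rw [e1]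
          exact if_pos True.intro
      have hrange : S = Set.range g := by
        ext e
        constructor
        · intro he
          obtain ⟨p, hp⟩ := hSg e he
          exact ⟨p, hp⟩
        · rintro ⟨p, rfl⟩
          exact hgS p
      have hginj : Function.Injective g := by
        rintro ⟨i, j⟩ ⟨i', j'⟩ h
        have hcj : cc (j : ℕ) = cc (j' : ℕ) := by rw [← hfg ⟨i, j⟩, ← hfg ⟨i', j'⟩, h]
        have hjj : (j : ℕ) = (j' : ℕ) := by
          rw [← ccv _ j.isLt, ← ccv _ j'.isLt, hcj]
        have hj' : j = j' := Fin.ext hjj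
        subst hj'
        -- now same branch
        have hii : (i : ℕ) = (i' : ℕ) := by
          have hb : (m - 1) * (i : ℕ) + (m - 1) ≤ (m - 1) * k := bound _ _ (by omega) (by omega)
          have hb' : (m - 1) * (i' : ℕ) + (m - 1) ≤ (m - 1) * k := bound _ _ (by omega) (by omega)
          by_cases h0 : (j : ℕ) = 0
          · simp only [hg, if_pos h0] at h
            rw [Sym2.eq_iff] at h
            rcases h with ⟨-, h2⟩ | ⟨h1, -⟩
            · have := vinj _ _ (by omega) (by omega) h2
              have hmpos : 0 < m - 1 := by omega
              exact Nat.eq_of_mul_eq_mul_left hmpos (by omega)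
            · exfalso
              exact vne 0 _ (by omega) (by omega) (by omega) h1
          · by_cases hlast : (j : ℕ) = m - 1
            · simp only [hg, if_neg h0, if_pos hlast] at h
              rw [Sym2.eq_iff] at h
              rcases h with ⟨h1, -⟩ | ⟨h1, -⟩
              · have := vinj _ _ (by omega) (by omega) h1
                have hmpos : 0 < m - 1 := by omega
                exact Nat.eq_of_mul_eq_mul_left hmpos (by omega)
              · exfalso
                exact vne _ 0 (by omega) (by omega) (by omega) h1
            · have hjlt : (j : ℕ) < m := j.isLt
              simp only [hg, if_neg h0, if_neg hlast] at h
              rw [Sym2.eq_iff] at h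
              rcases h with ⟨h1, -⟩ | ⟨h1, h2⟩
              · have := vinj _ _ (by omega) (by omega) h1
                have hmpos : 0 < m - 1 := by omega
                exact Nat.eq_of_mul_eq_mul_left hmpos (by omega)
              · exfalso
                have e1 := vinj _ _ (by omega) (by omega) h1
                have e2 := vinj _ _ (by omega) (by omega) h2
                omega
        exact Prod.ext (Fin.ext hii) rfl
      -- no loops in S
      have noLoop : ∀ e ∈ S, ¬ e.IsDiag := by
        intro e he
        obtain ⟨p, rfl⟩ := hSg e he
        obtain ⟨i, j⟩ := p
        have hb : (m - 1) * (i : ℕ) + (m - 1) ≤ (m - 1) * k := bound _ _ (by omega) (by omega)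
        by_cases h0 : (j : ℕ) = 0
        · simp only [hg, if_pos h0, Sym2.mk_isDiag_iff]
          exact vne 0 _ (by omega) (by omega) (by omega)
        · by_cases hlast : (j : ℕ) = m - 1
          · simp only [hg, if_neg h0, if_pos hlast, Sym2.mk_isDiag_iff]
            exact vne _ 0 (by omega) (by omega) (by omega)
          · have hjlt : (j : ℕ) < m := j.isLt
            simp only [hg, if_neg h0, if_neg hlast, Sym2.mk_isDiag_iff]
            exact vne _ _ (by omega) (by omega) (by omega)
      have hes : (SimpleGraph.fromEdgeSet S).edgeSet = S := by
        rw [SimpleGraph.edgeSet_fromEdgeSet]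
        ext e
        simp only [Set.mem_diff, Set.mem_setOf_eq]
        exact ⟨fun h => h.1, fun h => ⟨h, noLoop e h⟩⟩
      rw [hes, hrange, ← Set.image_univ, Set.ncard_image_of_injective _ hginj,
        Set.ncard_univ, Nat.card_eq_fintype_card, Fintype.card_prod, Fintype.card_fin,
        Fintype.card_fin, Nat.mul_comm]
end

section
/- If G is a (t+1)-color connected colored edge graph on n vertices with m = |C| colors and G' is obtained from G by adding one new vertex joined by t+1 new edges of pairwise distinct colors (from C) to t+1 distinct existing vertices, then G' is (t+1)-color connected. -/
/-- If `G` is a `(t+1)`-color connected colored edge graph and `G'`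
is obtained by adding one new vertex (`none`) joined by `t+1` new edges of
pairwise distinct colors to `t+1` distinct existing vertices (the set `S`),
then `G'` is `(t+1)`-color connected. -/
theorem stmt_15 {V C : Type*} (G : SimpleGraph V) (f : Sym2 V → C) (t : ℕ)
    (S : Finset V) (hS : S.card = t + 1)
    (hG : ∀ Ct : Finset C, Ct.card = t →
        ∀ A B : V, (G.deleteEdges (f ⁻¹' ↑Ct)).Reachable A B)
    (f' : Sym2 (Option V) → C)
    (hf'old : ∀ a b : V, f' s(some a, some b) = f s(a, b))
    (hf'new : ∀ u ∈ S, ∀ v ∈ S, u ≠ v →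
        f' s((none : Option V), some u) ≠ f' s((none : Option V), some v)) :
    ∀ Ct : Finset C, Ct.card = t → ∀ A B : Option V,
      ((SimpleGraph.fromRel (fun x y : Option V =>
          (∃ a b : V, x = some a ∧ y = some b ∧ G.Adj a b) ∨
          (x = none ∧ ∃ u ∈ S, y = some u))).deleteEdges
          (f' ⁻¹' ↑Ct)).Reachable A B := by
  classical
  intro Ct hCt A B
  set D := ((SimpleGraph.fromRel (fun x y : Option V =>
          (∃ a b : V, x = some a ∧ y = some b ∧ G.Adj a b) ∨
          (x = none ∧ ∃ u ∈ S, y = some u))).deleteEdges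
          (f' ⁻¹' ↑Ct)) with hD
  have hmap : ∀ a b : V, (G.deleteEdges (f ⁻¹' ↑Ct)).Adj a b →
      D.Adj (some a) (some b) := by
    intro a b hab
    rw [SimpleGraph.deleteEdges_adj] at hab
    obtain ⟨hadj, hmem⟩ := hab
    rw [hD, SimpleGraph.deleteEdges_adj, SimpleGraph.fromRel_adj]
    refine ⟨⟨by simp [hadj.ne], ?_⟩, ?_⟩
    · exact Or.inl (Or.inl ⟨a, b, rfl, rfl, hadj⟩)
    · simpa [hf'old] using hmem
  have hsome : ∀ a b : V, D.Reachable (some a) (some b) := fun a b =>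
    (hG Ct hCt a b).map ⟨some, @fun a b h => hmap a b h⟩
  have hnone : ∀ b : V, D.Reachable none (some b) := by
    intro b
    have hex : ∃ u ∈ S, f' s((none : Option V), some u) ∉ (Ct : Set C) := by
      by_contra h
      push_neg at h
      have hsub : S.image (fun u => f' s((none : Option V), some u)) ⊆ Ct := by
        intro c hc
        simp only [Finset.mem_image] at hc
        obtain ⟨u, huS, rfl⟩ := hc
        exact h u huS
      have hinj : Set.InjOn (fun u => f' s((none : Option V), some u)) ↑S := by
        intro u hu v hv huv
        by_contra hne
        exact hf'new u hu v hv hne huv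
      have := Finset.card_le_card hsub
      rw [Finset.card_image_of_injOn hinj, hS, hCt] at this
      omega
    obtain ⟨u, huS, hu⟩ := hex
    have hadj : D.Adj none (some u) := by
      rw [hD, SimpleGraph.deleteEdges_adj, SimpleGraph.fromRel_adj]
      refine ⟨⟨by simp, ?_⟩, hu⟩
      exact Or.inl (Or.inr ⟨rfl, u, huS, rfl⟩)
    exact hadj.reachable.trans (hsome u b)
  match A, B with
  | none, none => exact SimpleGraph.Reachable.refl _
  | none, some b => exact hnone b
  | some a, none => exact (hnone a).symm
  | some a, some b => exact hsome a b
end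

section
/- The problem of deciding, given a colored edge graph G(V,E,C,f), two nodes A, B ∈ V, and a positive integer t ≤ |C|, whether there exists a color set C' ⊆ C with |C'| ≤ t whose removal disconnects A from B (a t-color separator), is NP-hard; specifically, for the graph G_c constructed from an instance (G=(V,E), t) of Vertex Cover by taking vertices {A,B} ∪ {e_{(v_i,v_j)} : (v_i,v_j) ∈ E, i<j}, edges (A, e_{(v_i,v_j)}) colored c_{v_i} and (e_{(v_i,v_j)}, B) colored c_{v_j}, the graph G has a vertex cover of size at most t if and only if G_c has a t-color separator for A and B. -/
private lemma reach_pred_iff {α : Type*} {H : SimpleGraph α} {P : α → Prop}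
    (h : ∀ x y, H.Adj x y → (P x ↔ P y)) :
    ∀ {a b : α}, H.Reachable a b → (P a ↔ P b) := by
  intro a b hr
  obtain ⟨w⟩ := hr
  induction w with
  | nil => exact Iff.rfl
  | cons hadj _ ih => exact (h _ _ hadj).trans ih

/-- core of the NP-hardness reduction from Vertex Cover: for the
colored edge graph `G_c` built from a graph `G` — vertices `A = inl true`,
`B = inl false` and a vertex `inr e` per edge `e` of `G`; edges `(A, e)` colored
by the smaller endpoint of `e` and `(e, B)` colored by the larger endpoint —
`G` has a vertex cover of size at most `t` iff `G_c` has a `t`-color separator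
for `A` and `B`. -/
theorem stmt_17 {V : Type*} [Fintype V] [LinearOrder V]
    (G : SimpleGraph V) (t : ℕ) (ht : 1 ≤ t) (htV : t ≤ Fintype.card V)
    (fc : Sym2 (Bool ⊕ {e : Sym2 V // e ∈ G.edgeSet}) → V)
    (hfc : ∀ u w (h : G.Adj u w), u < w →
        fc s(Sum.inl true, Sum.inr ⟨s(u, w), (G.mem_edgeSet).mpr h⟩) = u ∧
        fc s(Sum.inl false, Sum.inr ⟨s(u, w), (G.mem_edgeSet).mpr h⟩) = w) :
    (∃ V' : Finset V, V'.card ≤ t ∧ ∀ u w : V, G.Adj u w → u ∈ V' ∨ w ∈ V') ↔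
    (∃ C' : Finset V, C'.card ≤ t ∧
        ¬ ((SimpleGraph.fromRel (fun x y : Bool ⊕ {e : Sym2 V // e ∈ G.edgeSet} =>
              (∃ b, x = Sum.inl b) ∧ (∃ e, y = Sum.inr e))).deleteEdges
            (fc ⁻¹' ↑C')).Reachable (Sum.inl true) (Sum.inl false)) := by
  constructor
  · rintro ⟨V', hcard, hcover⟩
    refine ⟨V', hcard, ?_⟩
    intro hreach
    -- key: for every edge-vertex, one of its two incident colors is in V'
    have hkey : ∀ (e : {e : Sym2 V // e ∈ G.edgeSet}),
        fc s(Sum.inl true, Sum.inr e) ∈ V' ∨ fc s(Sum.inl false, Sum.inr e) ∈ V' := by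
      rintro ⟨e, he⟩
      induction e using Sym2.ind with
      | _ u w =>
        have h : G.Adj u w := (G.mem_edgeSet).mp he
        rcases h.ne.lt_or_gt with hlt | hlt
        · obtain ⟨h1, h2⟩ := hfc u w h hlt
          rw [show (⟨s(u, w), he⟩ : {e : Sym2 V // e ∈ G.edgeSet}) =
              ⟨s(u, w), (G.mem_edgeSet).mpr h⟩ from rfl, h1, h2]
          exact hcover u w h
        · obtain ⟨h1, h2⟩ := hfc w u h.symm hlt
          rw [show (⟨s(u, w), he⟩ : {e : Sym2 V // e ∈ G.edgeSet}) =
              ⟨s(w, u), (G.mem_edgeSet).mpr h.symm⟩ from Subtype.ext (Sym2.eq_swap),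
            h1, h2]
          exact hcover w u h.symm
    set P : Bool ⊕ {e : Sym2 V // e ∈ G.edgeSet} → Prop := fun x =>
      x = Sum.inl false ∨
        ∃ e, x = Sum.inr e ∧ fc s(Sum.inl false, Sum.inr e) ∉ V' with hP
    have key : ∀ x y, ((SimpleGraph.fromRel (fun x y : Bool ⊕ {e : Sym2 V // e ∈ G.edgeSet} =>
              (∃ b, x = Sum.inl b) ∧ (∃ e, y = Sum.inr e))).deleteEdges
            (fc ⁻¹' ↑V')).Adj x y → (P x ↔ P y) := by
      intro x y hxy
      rw [SimpleGraph.deleteEdges_adj, SimpleGraph.fromRel_adj] at hxy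
      obtain ⟨⟨hne, hr⟩, hmem⟩ := hxy
      rw [Set.mem_preimage] at hmem
      have main : ∀ (b : Bool) (e : {e : Sym2 V // e ∈ G.edgeSet}),
          fc s(Sum.inl b, Sum.inr e) ∉ V' →
          (P (Sum.inl b) ↔ P (Sum.inr e)) := by
        intro b e hm
        cases b with
        | true =>
          constructor
          · rintro (h | ⟨e', he', _⟩) <;> simp_all
          · rintro (h | ⟨e', he', hfe'⟩)
            · simp_all
            · rw [Sum.inr.injEq] at he'
              subst he'
              exact (hfe' ((hkey e).resolve_left hm)).elim
        | false =>
          constructor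
          · rintro _
            exact Or.inr ⟨e, rfl, hm⟩
          · rintro _
            exact Or.inl rfl
      rcases hr with ⟨⟨b, hx⟩, ⟨e, hy⟩⟩ | ⟨⟨b, hy⟩, ⟨e, hx⟩⟩
      · subst hx; subst hy
        exact main b e (by simpa using hmem)
      · subst hx; subst hy
        rw [Sym2.eq_swap] at hmem
        exact (main b e (by simpa using hmem)).symm
    have := reach_pred_iff key hreach
    have h1 : P (Sum.inl false) := Or.inl rfl
    have h2 : ¬ P (Sum.inl true) := by
      rintro (h | ⟨e, he, _⟩) <;> simp_all [hP]
    exact h2 (this.mpr h1)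
  · rintro ⟨C', hcard, hdis⟩
    refine ⟨C', hcard, fun u w h => ?_⟩
    by_contra hc
    push_neg at hc
    obtain ⟨hu, hw⟩ := hc
    apply hdis
    have path : ∀ (a b : V) (hab : G.Adj a b), a < b → a ∉ C' → b ∉ C' →
        ((SimpleGraph.fromRel (fun x y : Bool ⊕ {e : Sym2 V // e ∈ G.edgeSet} =>
              (∃ b, x = Sum.inl b) ∧ (∃ e, y = Sum.inr e))).deleteEdges
            (fc ⁻¹' ↑C')).Reachable (Sum.inl true) (Sum.inl false) := by
      intro a b hab hlt ha hb
      obtain ⟨h1, h2⟩ := hfc a b hab hlt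
      set e : {e : Sym2 V // e ∈ G.edgeSet} := ⟨s(a, b), (G.mem_edgeSet).mpr hab⟩
      have adj1 : ((SimpleGraph.fromRel (fun x y : Bool ⊕ {e : Sym2 V // e ∈ G.edgeSet} =>
              (∃ b, x = Sum.inl b) ∧ (∃ e, y = Sum.inr e))).deleteEdges
            (fc ⁻¹' ↑C')).Adj (Sum.inl true) (Sum.inr e) := by
        rw [SimpleGraph.deleteEdges_adj, SimpleGraph.fromRel_adj]
        refine ⟨⟨by simp, Or.inl ⟨⟨true, rfl⟩, ⟨e, rfl⟩⟩⟩, ?_⟩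
        rw [Set.mem_preimage]
        simpa [h1] using ha
      have adj2 : ((SimpleGraph.fromRel (fun x y : Bool ⊕ {e : Sym2 V // e ∈ G.edgeSet} =>
              (∃ b, x = Sum.inl b) ∧ (∃ e, y = Sum.inr e))).deleteEdges
            (fc ⁻¹' ↑C')).Adj (Sum.inr e) (Sum.inl false) := by
        rw [SimpleGraph.deleteEdges_adj, SimpleGraph.fromRel_adj]
        refine ⟨⟨by simp, Or.inr ⟨⟨false, rfl⟩, ⟨e, rfl⟩⟩⟩, ?_⟩
        rw [Set.mem_preimage, Sym2.eq_swap]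
        simpa [h2] using hb
      exact adj1.reachable.trans adj2.reachable
    rcases h.ne.lt_or_gt with hlt | hlt
    · exact path u w h hlt hu hw
    · exact path w u h.symm hlt hw hu
end
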